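/- Let p be an odd prime, let k be a field of characteristic p, and let a ∈ k with a ≠ 0 and a ≠ 1. Then the rational function 1/(x(x − 1)(x − a))^{(p+1)/2} is exact if and only if ∑_{i=0}^{(p−1)/2} binom((p−1)/2, i)^2 · a^{(p−1)/2 − i} = 0 in k. -/

import Mathlib

open Polynomial

/-- `HasDerivRF f g` means `g` is the formal derivative of the rational function `f` in `k(x)`:
if `f = u / v` with `v ≠ 0`, then `g = (u' v - u v') / v ^ 2`. -/
def HasDerivRF {k : Type*} [Field k] (f g : RatFunc k) : Prop :=
  ∃ u v : Polynomial k, v ≠ 0 ∧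
    f = algebraMap (Polynomial k) (RatFunc k) u / algebraMap (Polynomial k) (RatFunc k) v ∧
    g = algebraMap (Polynomial k) (RatFunc k)
          (Polynomial.derivative u * v - u * Polynomial.derivative v) /
        algebraMap (Polynomial k) (RatFunc k) (v ^ 2)

/-- A rational function is exact if it is the formal derivative of some rational function. -/
def IsExactRF {k : Type*} [Field k] (g : RatFunc k) : Prop := ∃ f : RatFunc k, HasDerivRF f g

/-! Write `D = x(x-1)(x-a)` and `m = (p-1)/2`, so the function is `D^m / D^p`. Since `(u/v)' =
(u v^(p-1))' / v^p` and `p`-th powers have zero derivative, `h / v^p` is exact exactly when the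
polynomial `h` is a derivative, i.e. when all coefficients of `h` at exponents `≡ -1 (mod p)`
vanish. As `deg D^m = 3m < 2p - 1`, this only concerns the coefficient of `x^(p-1) = x^(2m)`,
and that coefficient of `D^m` is `(-1)^m ∑ᵢ C(m,i)² a^(m-i)`. -/

namespace Polynomial

section CharP

variable {R : Type*} [CommRing R] {p : ℕ} [CharP R p]

theorem coeff_derivative_eq_zero_of_dvd (w : R[X]) {n : ℕ} (hn : p ∣ n + 1) :
    (derivative w).coeff n = 0 := by
  have h : ((n + 1 : ℕ) : R) = 0 := (CharP.cast_eq_zero_iff R p _).mpr hn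
  rw [coeff_derivative, ← Nat.cast_succ, h, mul_zero]

theorem coeff_pow_char_eq_zero [Fact p.Prime] (v : R[X]) {n : ℕ} (hn : ¬ p ∣ n) :
    (v ^ p).coeff n = 0 := by
  rw [← map_frobenius_expand, coeff_map, coeff_expand (Fact.out : p.Prime).pos, if_neg hn,
    map_zero]

theorem derivative_pow_char (v : R[X]) : derivative (v ^ p) = 0 := by
  rw [derivative_pow, CharP.cast_eq_zero R p, map_zero, zero_mul, zero_mul]

/-- The quotient rule in the form `(u / v)' = (u * v ^ (p - 1))' / v ^ p`. -/
theorem derivative_mul_pow_sub_one_mul_sq [Fact p.Prime] (u v : R[X]) :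
    derivative (u * v ^ (p - 1)) * v ^ 2 = (derivative u * v - u * derivative v) * v ^ p := by
  obtain ⟨n, rfl⟩ : ∃ n, p = n + 2 := ⟨p - 2, by have := (Fact.out : p.Prime).two_le; omega⟩
  have hcast : ((n + 1 : ℕ) : R) = -1 := by
    have h := CharP.cast_eq_zero R (n + 2)
    push_cast at h ⊢
    linear_combination h
  rw [show n + 2 - 1 = n + 1 by omega, derivative_mul, derivative_pow, hcast, Nat.add_sub_cancel,
    map_neg, map_one]
  ring

end CharP

section Field

variable {k : Type*} [Field k] {p : ℕ} [CharP k p]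

theorem mem_range_derivative_iff {f : k[X]} :
    f ∈ LinearMap.range (derivative : k[X] →ₗ[k] k[X]) ↔ ∀ n, p ∣ n + 1 → f.coeff n = 0 := by
  constructor
  · rintro ⟨w, rfl⟩ n hn
    exact coeff_derivative_eq_zero_of_dvd w hn
  · intro hf
    refine ⟨∑ j ∈ Finset.range (f.natDegree + 1), C (f.coeff j / (j + 1)) * X ^ (j + 1), ?_⟩
    conv_rhs => rw [f.as_sum_range_C_mul_X_pow]
    rw [map_sum]
    refine Finset.sum_congr rfl fun j _ => ?_
    rw [derivative_C_mul_X_pow, Nat.add_sub_cancel, Nat.cast_succ]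
    by_cases hj : (j + 1 : k) = 0
    · rw [hf j ((CharP.cast_eq_zero_iff k p _).mp (by exact_mod_cast hj))]
      simp
    · rw [div_mul_cancel₀ _ hj]

theorem mem_range_derivative_iff_coeff_of_natDegree_lt {f : k[X]}
    (hf : f.natDegree + 1 < 2 * p) :
    f ∈ LinearMap.range (derivative : k[X] →ₗ[k] k[X]) ↔ f.coeff (p - 1) = 0 := by
  rw [mem_range_derivative_iff (p := p)]
  refine ⟨fun h => h (p - 1) ⟨1, by omega⟩, fun h n hn => ?_⟩
  rcases le_or_gt n f.natDegree with hnf | hnf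
  · rwa [show n = p - 1 by have := Nat.eq_of_dvd_of_lt_two_mul (by omega) hn (by omega); omega]
  · exact coeff_eq_zero_of_natDegree_lt hnf

/-- Look at the largest exponent `n ≡ -1 (mod p)` where `f` has a nonzero coefficient: since the
coefficients of `v ^ p` live at multiples of `p`, the coefficient of `f * v ^ p` at
`n + p * deg v` is `f.coeff n * lc(v) ^ p ≠ 0`. -/
theorem mem_range_derivative_of_mul_pow_char [Fact p.Prime] {f v : k[X]} (hv : v ≠ 0)
    (h : f * v ^ p ∈ LinearMap.range (derivative : k[X] →ₗ[k] k[X])) :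
    f ∈ LinearMap.range (derivative : k[X] →ₗ[k] k[X]) := by
  classical
  rw [mem_range_derivative_iff (p := p)] at h ⊢
  by_contra! hbad
  set S := f.support.filter fun n => p ∣ n + 1
  have hS : S.Nonempty := by
    obtain ⟨n, hn, hfn⟩ := hbad
    exact ⟨n, Finset.mem_filter.mpr ⟨mem_support_iff.mpr hfn, hn⟩⟩
  set n := S.max' hS
  obtain ⟨hfn, hn⟩ := Finset.mem_filter.mp (S.max'_mem hS)
  have hmax (i : ℕ) (hi : n < i) (hpi : p ∣ i + 1) : f.coeff i = 0 := by_contra fun hfi =>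
    hi.not_ge (S.le_max' i (Finset.mem_filter.mpr ⟨mem_support_iff.mpr hfi, hpi⟩))
  set d := v.natDegree
  have hdeg : (v ^ p).natDegree = p * d := natDegree_pow v p
  have hcoeff : (f * v ^ p).coeff (n + p * d) = f.coeff n * v.leadingCoeff ^ p := by
    rw [coeff_mul, Finset.sum_eq_single (n, p * d)]
    · rw [← hdeg, coeff_natDegree, leadingCoeff_pow]
    · rintro ⟨i, j⟩ hij hne
      have hij : i + j = n + p * d := Finset.HasAntidiagonal.mem_antidiagonal.mp hij
      rcases lt_trichotomy i n with hin | rfl | hin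
      · rw [coeff_eq_zero_of_natDegree_lt (by omega : (v ^ p).natDegree < j), mul_zero]
      · exact (hne (by congr; omega)).elim
      · by_cases hpj : p ∣ j
        · obtain ⟨c, rfl⟩ := hpj
          have hpi : p ∣ (i + 1) + p * c := by
            rw [show i + 1 + p * c = (n + 1) + p * d by omega]
            exact dvd_add hn (dvd_mul_right p d)
          rw [hmax i hin ((Nat.dvd_add_left (dvd_mul_right p c)).mp hpi), zero_mul]
        · rw [coeff_pow_char_eq_zero v hpj, mul_zero]
    · exact fun hmem => (hmem (Finset.HasAntidiagonal.mem_antidiagonal.mpr rfl)).elim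
  have hzero := h (n + p * d) (by rw [add_right_comm]; exact dvd_add hn (dvd_mul_right p d))
  rw [hcoeff] at hzero
  exact mem_support_iff.mp hfn
    ((mul_eq_zero.mp hzero).resolve_right (pow_ne_zero p (leadingCoeff_ne_zero.mpr hv)))

end Field

theorem coeff_X_mul_X_sub_one_mul_X_sub_C_pow {R : Type*} [CommRing R] (a : R) (m : ℕ) :
    ((X * (X - 1) * (X - C a)) ^ m).coeff (2 * m) =
      (-1) ^ m * ∑ i ∈ Finset.range (m + 1), (m.choose i : R) ^ 2 * a ^ (m - i) := by
  have hsplit : (X * (X - 1) * (X - C a)) ^ m = X ^ m * ((X + C (-a)) ^ m * (X + C (-1)) ^ m) := by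
    simp only [map_neg, C_1, ← sub_eq_add_neg, mul_pow]
    ring
  rw [hsplit, two_mul, coeff_X_pow_mul, coeff_mul, Finset.Nat.sum_antidiagonal_eq_sum_range_succ_mk,
    Finset.mul_sum]
  refine Finset.sum_congr rfl fun i hi => ?_
  have him : i ≤ m := Nat.lt_succ_iff.mp (Finset.mem_range.mp hi)
  rw [coeff_X_add_C_pow, coeff_X_add_C_pow, Nat.sub_sub_self him, Nat.choose_symm him, neg_pow a,
    show (-1 : R) ^ m = (-1) ^ (m - i) * (-1) ^ i by rw [← pow_add, Nat.sub_add_cancel him]]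
  ring

end Polynomial

section RatFunc

variable {k : Type*} [Field k] {p : ℕ} [CharP k p] [Fact p.Prime]

local notation "A" => algebraMap k[X] (RatFunc k)

theorem exists_eq_derivative_div_pow_of_isExactRF {g : RatFunc k} (hg : IsExactRF g) :
    ∃ w v : k[X], v ≠ 0 ∧ g = A (derivative w) / A (v ^ p) := by
  obtain ⟨-, u, v, hv, -, rfl⟩ := hg
  refine ⟨u * v ^ (p - 1), v, hv, ?_⟩
  rw [div_eq_div_iff (RatFunc.algebraMap_ne_zero (pow_ne_zero 2 hv))
    (RatFunc.algebraMap_ne_zero (pow_ne_zero p hv)), ← map_mul, ← map_mul,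
    derivative_mul_pow_sub_one_mul_sq]

theorem isExactRF_div_pow_char_iff {f D : k[X]} (hD : D ≠ 0) :
    IsExactRF (A f / A (D ^ p)) ↔ f ∈ LinearMap.range (derivative : k[X] →ₗ[k] k[X]) := by
  have hDp : A (D ^ p) ≠ 0 := RatFunc.algebraMap_ne_zero (pow_ne_zero p hD)
  constructor
  · intro hf
    obtain ⟨w, v, hv, hwv⟩ := exists_eq_derivative_div_pow_of_isExactRF hf
    rw [div_eq_div_iff hDp (RatFunc.algebraMap_ne_zero (pow_ne_zero p hv)), ← map_mul,
      ← map_mul] at hwv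
    refine mem_range_derivative_of_mul_pow_char hv ⟨w * D ^ p, ?_⟩
    rw [derivative_mul, derivative_pow_char, mul_zero, add_zero]
    exact (RatFunc.algebraMap_injective k hwv).symm
  · rintro ⟨w, rfl⟩
    refine ⟨A w / A (D ^ p), w, D ^ p, pow_ne_zero p hD, rfl, ?_⟩
    rw [derivative_pow_char, mul_zero, sub_zero, map_mul, sq, map_mul, mul_div_mul_right _ _ hDp]

end RatFunc

theorem stmt13_general {k : Type*} [Field k] (p : ℕ) (hp : p.Prime) (hodd : Odd p) [CharP k p]
    (a : k) :
    IsExactRF (((RatFunc.X * (RatFunc.X - 1) * (RatFunc.X - RatFunc.C a)) ^ ((p + 1) / 2))⁻¹) ↔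
      ∑ i ∈ Finset.range ((p - 1) / 2 + 1),
        ((Nat.choose ((p - 1) / 2) i : k)) ^ 2 * a ^ ((p - 1) / 2 - i) = 0 := by
  have := Fact.mk hp
  obtain ⟨m, rfl⟩ := hodd
  set D : k[X] := X * (X - 1) * (X - C a)
  have hD : D ≠ 0 := by unfold D; exact Monic.ne_zero (by monicity!)
  have hdeg : (D ^ m).natDegree ≤ 3 * m := by unfold D; compute_degree; omega
  have hfun : ((RatFunc.X * (RatFunc.X - 1) * (RatFunc.X - RatFunc.C a)) ^ ((2 * m + 1 + 1) / 2))⁻¹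
      = algebraMap k[X] (RatFunc k) (D ^ m) / algebraMap k[X] (RatFunc k) (D ^ (2 * m + 1)) := by
    rw [show (2 * m + 1 + 1) / 2 = m + 1 by omega, ← RatFunc.algebraMap_X, ← RatFunc.algebraMap_C,
      ← map_one (algebraMap k[X] (RatFunc k)), ← map_sub, ← map_sub, ← map_mul, ← map_mul,
      ← map_pow, eq_div_iff (RatFunc.algebraMap_ne_zero (pow_ne_zero _ hD)),
      inv_mul_eq_iff_eq_mul₀ (RatFunc.algebraMap_ne_zero (pow_ne_zero _ hD)), ← map_mul, ← pow_add]
    congr 2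
    omega
  rw [hfun, isExactRF_div_pow_char_iff hD,
    mem_range_derivative_iff_coeff_of_natDegree_lt (by omega), show 2 * m + 1 - 1 = 2 * m by omega,
    coeff_X_mul_X_sub_one_mul_X_sub_C_pow, Nat.mul_div_cancel_left m two_pos, mul_eq_zero,
    or_iff_right (pow_ne_zero m (neg_ne_zero.mpr one_ne_zero))]

/-- For an odd prime `p` and `a ∈ k`, `a ≠ 0, 1`: the rational function
`1/(x(x-1)(x-a))^{(p+1)/2}` is exact iff `∑ᵢ C((p-1)/2, i)² a^{(p-1)/2 - i} = 0` in `k`. -/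
theorem stmt13 {k : Type*} [Field k] (p : ℕ) (hp : p.Prime) (hodd : Odd p) [CharP k p]
    (a : k) (ha0 : a ≠ 0) (ha1 : a ≠ 1) :
    IsExactRF (((RatFunc.X * (RatFunc.X - 1) * (RatFunc.X - RatFunc.C a)) ^ ((p + 1) / 2))⁻¹) ↔
      ∑ i ∈ Finset.range ((p - 1) / 2 + 1),
        ((Nat.choose ((p - 1) / 2) i : k)) ^ 2 * a ^ ((p - 1) / 2 - i) = 0 :=
  stmt13_general p hp hodd a
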